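/- Let (μ,ν,λ) ∈ Par_n^3 satisfy every extended Horn inequality. Then |μ ∧ ν| ≥ (|μ| + |ν| − |λ|)/2, and the same holds for every permutation of the roles of μ, ν, λ. -/

import Mathlib

/-- `μ` is a partition with at most `n` parts: a weakly decreasing sequence
`μ 0 ≥ μ 1 ≥ ⋯` of naturals (the paper's part `μ_{i+1}` is `μ i`, i.e. we use
0-indexing) vanishing from index `n` on. -/
def IsPartitionN (n : ℕ) (μ : ℕ → ℕ) : Prop :=
  Antitone μ ∧ ∀ i, n ≤ i → μ i = 0

/-- The cells `(row, column)` (both 0-indexed) of the skew shape `lam/mu`. -/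
def skewCells (lam mu : ℕ → ℕ) : Set (ℕ × ℕ) :=
  {p | mu p.1 ≤ p.2 ∧ p.2 < lam p.1}

/-- `T` is a Littlewood–Richardson skew tableau of shape `lam/mu` and content
`nu`: the shape `mu` is contained in `lam`, rows weakly increase, columns
strictly increase, the (0-indexed) letter `t` occurs `nu t` times, and every
prefix of the reverse reading word (rows read right-to-left, top-to-bottom)
contains at least as many letters `t` as letters `t+1`. -/
def IsLRTableau (lam mu nu : ℕ → ℕ) (T : ℕ × ℕ → ℕ) : Prop :=
  (∀ i, mu i ≤ lam i) ∧
  (∀ i j j', mu i ≤ j → j ≤ j' → j' < lam i → T (i, j) ≤ T (i, j')) ∧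
  (∀ i j, (i, j) ∈ skewCells lam mu → (i + 1, j) ∈ skewCells lam mu →
    T (i, j) < T (i + 1, j)) ∧
  (∀ t, Set.ncard {p ∈ skewCells lam mu | T p = t} = nu t) ∧
  (∀ i j t,
    Set.ncard {p ∈ skewCells lam mu |
        T p = t + 1 ∧ (p.1 < i ∨ (p.1 = i ∧ j ≤ p.2))} ≤
      Set.ncard {p ∈ skewCells lam mu |
        T p = t ∧ (p.1 < i ∨ (p.1 = i ∧ j ≤ p.2))})

/-- The Littlewood–Richardson coefficient `c^{lam}_{mu,nu}`: the number of
Littlewood–Richardson skew tableaux of shape `lam/mu` and content `nu`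
(tableaux are normalized to vanish off the shape). -/
noncomputable def lrCoeff (lam mu nu : ℕ → ℕ) : ℕ :=
  Set.ncard {T : ℕ × ℕ → ℕ | IsLRTableau lam mu nu T ∧
    ∀ p ∉ skewCells lam mu, T p = 0}

/-- The Newell–Littlewood number
`N_{μ,ν,λ} = ∑_{α,β,γ} c^μ_{α,β} c^ν_{α,γ} c^λ_{β,γ}`, realized as the number
of tuples `((α, β, γ), (T₁, T₂, T₃))` where `α, β, γ` are partitions and
`T₁, T₂, T₃` are Littlewood–Richardson tableaux witnessing the coefficients
`c^μ_{α,β}`, `c^ν_{α,γ}` and `c^λ_{β,γ}` respectively. -/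
noncomputable def nlNumber (mu nu lam : ℕ → ℕ) : ℕ :=
  Set.ncard {x : ((ℕ → ℕ) × (ℕ → ℕ) × (ℕ → ℕ)) ×
      ((ℕ × ℕ → ℕ) × (ℕ × ℕ → ℕ) × (ℕ × ℕ → ℕ)) |
    Antitone x.1.1 ∧ Antitone x.1.2.1 ∧ Antitone x.1.2.2 ∧
    (IsLRTableau mu x.1.1 x.1.2.1 x.2.1 ∧
      ∀ p ∉ skewCells mu x.1.1, x.2.1 p = 0) ∧
    (IsLRTableau nu x.1.1 x.1.2.2 x.2.2.1 ∧
      ∀ p ∉ skewCells nu x.1.1, x.2.2.1 p = 0) ∧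
    (IsLRTableau lam x.1.2.1 x.1.2.2 x.2.2.2 ∧
      ∀ p ∉ skewCells lam x.1.2.1, x.2.2.2 p = 0)}

/-- For `I = {i₁ < ⋯ < i_d} ⊆ {0, 1, 2, …}` (the 0-indexed version of the
paper's subsets of positive integers), `tauPartition I` is `τ(I)`, i.e. the
partition whose (0-indexed) part `t` is `i_{d-t} − (d−t−1) - 1`; for the
paper's 1-indexed sets this is `τ(I) = (i_d − d ≥ ⋯ ≥ i₂ − 2 ≥ i₁ − 1)`. -/
def tauPartition (I : Finset ℕ) : ℕ → ℕ := fun t =>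
  if t < I.card then
    (I.sort (· ≤ ·)).getD (I.card - 1 - t) 0 - (I.card - 1 - t)
  else 0

/-- Conditions (I)–(III) defining the set `𝒢_n` of data for the extended Horn
inequalities: all six sets are subsets of `{0, …, n−1}` (the 0-indexed version
of `[n] = {1, …, n}`), `A ∩ A' = B ∩ B' = C ∩ C' = ∅`,
`|A| = |B'| + |C'|`, `|B| = |A'| + |C'|`, `|C| = |A'| + |B'|`, and there exist
`A₁, A₂, B₁, B₂, C₁, C₂ ⊆ {0, …, n−1}` with `|A₁| = |A₂| = |A'|`,
`|B₁| = |B₂| = |B'|`, `|C₁| = |C₂| = |C'|` such that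
`c^{τ(A')}_{τ(A₁),τ(A₂)}, c^{τ(B')}_{τ(B₁),τ(B₂)}, c^{τ(C')}_{τ(C₁),τ(C₂)} > 0`
and `c^{τ(A)}_{τ(B₁),τ(C₂)}, c^{τ(B)}_{τ(C₁),τ(A₂)}, c^{τ(C)}_{τ(A₁),τ(B₂)} > 0`. -/
def IsExtHornTuple (n : ℕ) (A A' B B' C C' : Finset ℕ) : Prop :=
  A ⊆ Finset.range n ∧ A' ⊆ Finset.range n ∧ B ⊆ Finset.range n ∧
    B' ⊆ Finset.range n ∧ C ⊆ Finset.range n ∧ C' ⊆ Finset.range n ∧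
  Disjoint A A' ∧ Disjoint B B' ∧ Disjoint C C' ∧
  A.card = B'.card + C'.card ∧ B.card = A'.card + C'.card ∧
    C.card = A'.card + B'.card ∧
  ∃ A₁ A₂ B₁ B₂ C₁ C₂ : Finset ℕ,
    A₁ ⊆ Finset.range n ∧ A₂ ⊆ Finset.range n ∧ B₁ ⊆ Finset.range n ∧
      B₂ ⊆ Finset.range n ∧ C₁ ⊆ Finset.range n ∧ C₂ ⊆ Finset.range n ∧
    A₁.card = A'.card ∧ A₂.card = A'.card ∧ B₁.card = B'.card ∧
      B₂.card = B'.card ∧ C₁.card = C'.card ∧ C₂.card = C'.card ∧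
    0 < lrCoeff (tauPartition A') (tauPartition A₁) (tauPartition A₂) ∧
    0 < lrCoeff (tauPartition B') (tauPartition B₁) (tauPartition B₂) ∧
    0 < lrCoeff (tauPartition C') (tauPartition C₁) (tauPartition C₂) ∧
    0 < lrCoeff (tauPartition A) (tauPartition B₁) (tauPartition C₂) ∧
    0 < lrCoeff (tauPartition B) (tauPartition C₁) (tauPartition A₂) ∧
    0 < lrCoeff (tauPartition C) (tauPartition A₁) (tauPartition B₂)

/-- `(μ, ν, lam)` satisfies every extended Horn inequality (with ambient set
`{0, …, n−1}`). -/
def SatisfiesExtHorn (n : ℕ) (μ ν lam : ℕ → ℕ) : Prop :=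
  ∀ A A' B B' C C' : Finset ℕ, IsExtHornTuple n A A' B B' C C' →
    (0 : ℤ) ≤ (∑ i ∈ A, (μ i : ℤ)) - (∑ i ∈ A', (μ i : ℤ)) +
      (∑ j ∈ B, (ν j : ℤ)) - (∑ j ∈ B', (ν j : ℤ)) +
      (∑ k ∈ C, (lam k : ℤ)) - (∑ k ∈ C', (lam k : ℤ))

/-!
For `T ⊆ [n]` the sets `(A, A', B, B', C, C') = (T, Tᶜ, Tᶜ, T, [n], ∅)` satisfy (I)–(III):
since `τ([k]) = ∅`, every Littlewood–Richardson coefficient demanded by (III) has the form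
`c^τ_{τ,∅}` or `c^τ_{∅,τ}`, which is positive (witnessed by the empty tableau and by the
tableau whose `i`-th row is filled with `i`). The inequality of this tuple reads
`|λ| ≥ ∑_{i ∈ T} (ν_i - μ_i) + ∑_{i ∉ T} (μ_i - ν_i)`, and for `T = {i | μ_i ≤ ν_i}` this is
`|λ| ≥ ∑ |μ_i - ν_i| = |μ| + |ν| - 2 |μ ∧ ν|`.

Conditions (I)–(III) are invariant under the cyclic rotation of `(A, A'), (B, B'), (C, C')`,
which gives the cyclic permutations of `(μ, ν, λ)`; the others come for free since
`|μ| + |ν| - 2 |μ ∧ ν|` is symmetric in `μ` and `ν`.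
-/

open Finset

theorem List.SortedLT.getElem_add_sub_le {l : List ℕ} (h : l.SortedLT) {i j : ℕ}
    (hij : i ≤ j) (hj : j < l.length) : l[i] + (j - i) ≤ l[j] := by
  induction j with
  | zero => simp [Nat.le_zero.mp hij]
  | succ j ih =>
    rcases hij.eq_or_lt with rfl | hlt
    · simp
    · have := ih (by omega) (by omega)
      have := h.getElem_lt_getElem_of_lt (hi := by omega) (hj := hj) (Nat.lt_succ_self j)
      omega

theorem tauPartition_antitone (I : Finset ℕ) : Antitone (tauPartition I) := by
  intro t t' htt'
  by_cases ht' : t' < #I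
  · have hlen : (I.sort (· ≤ ·)).length = #I := length_sort _
    have key := (sortedLT_sort I).getElem_add_sub_le (i := #I - 1 - t') (j := #I - 1 - t)
      (by omega) (by omega)
    simp only [tauPartition, if_pos ht', if_pos (htt'.trans_lt ht'),
      List.getD_eq_getElem (I.sort (· ≤ ·)) 0 (show #I - 1 - t < _ by omega),
      List.getD_eq_getElem (I.sort (· ≤ ·)) 0 (show #I - 1 - t' < _ by omega)]
    omega
  · simp [tauPartition, ht']

theorem tauPartition_eq_zero_of_card_le {I : Finset ℕ} {t : ℕ} (ht : #I ≤ t) :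
    tauPartition I t = 0 := by
  simp [tauPartition, Nat.not_lt.mpr ht]

theorem tauPartition_range (k : ℕ) : tauPartition (range k) = 0 := by
  funext t
  by_cases ht : t < k
  · simp [tauPartition, ht, List.getElem?_range (show k - 1 - t < k by omega)]
  · simp [tauPartition, ht]

theorem Set.Finite.setOf_support_subset_and_le {α : Type*} {S : Set α}
    (hS : S.Finite) (k : ℕ) : {T : α → ℕ | T.support ⊆ S ∧ ∀ p, T p ≤ k}.Finite := by
  have : Finite S := hS.to_subtype
  refine Set.Finite.of_finite_image (f := fun T (p : S) => T p) ?_ ?_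
  · refine (Set.Finite.pi (t := fun _ : S => Set.Iic k) fun _ => Set.finite_Iic k).subset ?_
    rintro _ ⟨T, hT, rfl⟩ p -
    exact hT.2 p
  · intro T₁ h₁ T₂ h₂ h
    funext p
    by_cases hp : p ∈ S
    · exact congrFun h ⟨p, hp⟩
    · rw [Function.notMem_support.mp (mt (h₁.1 ·) hp),
        Function.notMem_support.mp (mt (h₂.1 ·) hp)]

theorem skewCells_finite {lam : ℕ → ℕ} {m : ℕ} (hm : ∀ i, m ≤ i → lam i = 0) (mu : ℕ → ℕ) :
    (skewCells lam mu).Finite := by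
  refine (range m ×ˢ range (∑ i ∈ range m, lam i)).finite_toSet.subset ?_
  rintro ⟨i, j⟩ ⟨-, hj⟩
  have hi : i < m := by
    by_contra hi
    simp [hm i (by omega)] at hj
  simp only [coe_product, coe_range, Set.mem_prod, Set.mem_Iio]
  exact ⟨hi, hj.trans_le (single_le_sum (fun _ _ => Nat.zero_le _) (mem_range.mpr hi))⟩

theorem IsLRTableau.lt_of_mem {lam mu nu : ℕ → ℕ} {T : ℕ × ℕ → ℕ}
    (hT : IsLRTableau lam mu nu T) (hfin : (skewCells lam mu).Finite) {k : ℕ}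
    (hk : ∀ t, k ≤ t → nu t = 0) {p : ℕ × ℕ} (hp : p ∈ skewCells lam mu) : T p < k := by
  by_contra! hle
  have hpos : 0 < Set.ncard {q ∈ skewCells lam mu | T q = T p} :=
    (Set.ncard_pos (hfin.subset fun _ hq => hq.1)).mpr ⟨p, hp, rfl⟩
  rw [hT.2.2.2.1, hk _ hle] at hpos
  exact hpos.false

theorem lrCoeff_pos_of_isLRTableau {lam mu nu : ℕ → ℕ} {T : ℕ × ℕ → ℕ}
    (hfin : (skewCells lam mu).Finite) {k : ℕ} (hk : ∀ t, k ≤ t → nu t = 0)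
    (hT : IsLRTableau lam mu nu T) (hT₀ : ∀ p ∉ skewCells lam mu, T p = 0) :
    0 < lrCoeff lam mu nu := by
  have hsub : {T : ℕ × ℕ → ℕ | IsLRTableau lam mu nu T ∧ ∀ p ∉ skewCells lam mu, T p = 0} ⊆
      {T | T.support ⊆ skewCells lam mu ∧ ∀ p, T p ≤ k} := by
    rintro T' ⟨hT', hT'₀⟩
    refine ⟨Function.support_subset_iff'.mpr hT'₀, fun p => ?_⟩
    by_cases hp : p ∈ skewCells lam mu
    · exact (hT'.lt_of_mem hfin hk hp).le
    · simp [hT'₀ p hp]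
  exact (Set.ncard_pos ((hfin.setOf_support_subset_and_le k).subset hsub)).mpr
    ⟨T, hT, hT₀⟩

theorem lrCoeff_self_zero_pos (f : ℕ → ℕ) : 0 < lrCoeff f f 0 := by
  have hempty : skewCells f f = ∅ := by
    ext p
    simp only [skewCells, Set.mem_ofPred_eq, Set.mem_empty_iff_false, iff_false]
    omega
  refine lrCoeff_pos_of_isLRTableau (T := 0) (k := 0) (by simp [hempty]) (fun _ _ => rfl)
    ⟨fun _ => le_rfl, fun _ _ _ _ _ _ => le_rfl, ?_, ?_, ?_⟩ (fun _ _ => rfl)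
  all_goals simp [hempty]

def rowTableau (f : ℕ → ℕ) (p : ℕ × ℕ) : ℕ := if p.2 < f p.1 then p.1 else 0

theorem mem_skewCells_zero {f : ℕ → ℕ} {p : ℕ × ℕ} : p ∈ skewCells f 0 ↔ p.2 < f p.1 := by
  simp [skewCells]

theorem rowTableau_of_mem {f : ℕ → ℕ} {p : ℕ × ℕ} (hp : p ∈ skewCells f 0) :
    rowTableau f p = p.1 :=
  if_pos (mem_skewCells_zero.mp hp)

theorem rowTableau_of_notMem {f : ℕ → ℕ} {p : ℕ × ℕ} (hp : p ∉ skewCells f 0) :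
    rowTableau f p = 0 :=
  if_neg (mt mem_skewCells_zero.mpr hp)

theorem setOf_rowTableau_eq (f : ℕ → ℕ) (t : ℕ) :
    {p ∈ skewCells f 0 | rowTableau f p = t} = ↑(({t} : Finset ℕ) ×ˢ range (f t)) := by
  ext ⟨i, j⟩
  simp only [Set.mem_ofPred_eq, coe_product, coe_singleton, coe_range, Set.mem_prod,
    Set.mem_singleton_iff, Set.mem_Iio]
  constructor
  · rintro ⟨hp, ht⟩
    rw [rowTableau_of_mem hp] at ht
    subst ht
    exact ⟨rfl, mem_skewCells_zero.mp hp⟩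
  · rintro ⟨rfl, hj⟩
    exact ⟨mem_skewCells_zero.mpr hj, rowTableau_of_mem (mem_skewCells_zero.mpr hj)⟩

theorem ncard_rowTableau_eq (f : ℕ → ℕ) (t : ℕ) :
    Set.ncard {p ∈ skewCells f 0 | rowTableau f p = t} = f t := by
  rw [setOf_rowTableau_eq, Set.ncard_coe_finset, card_product, card_singleton, card_range,
    one_mul]

theorem isLRTableau_rowTableau {f : ℕ → ℕ} (hf : Antitone f) :
    IsLRTableau f 0 f (rowTableau f) := by
  refine ⟨fun _ => Nat.zero_le _, ?_, ?_, ncard_rowTableau_eq f, ?_⟩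
  · intro i j j' _ hjj' hj'
    rw [rowTableau_of_mem (mem_skewCells_zero.mpr (by simp only; omega)),
      rowTableau_of_mem (mem_skewCells_zero.mpr hj')]
  · intro i j hij hij₁
    rw [rowTableau_of_mem hij, rowTableau_of_mem hij₁]
    exact Nat.lt_succ_self i
  · -- `(t + 1, j) ↦ (t, j)` sends the letters `t + 1` of a prefix of the reading word
    -- injectively to letters `t` that come earlier.
    intro i j t
    refine Set.ncard_le_ncard_of_injOn (fun p => (t, p.2)) ?_ ?_
      ((setOf_rowTableau_eq f t ▸ finite_toSet _ :
        {p ∈ skewCells f 0 | rowTableau f p = t}.Finite).subset fun _ hp => ⟨hp.1, hp.2.1⟩)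
    · rintro p ⟨hp, hpt, hpi⟩
      rw [rowTableau_of_mem hp] at hpt
      have hcell : (t, p.2) ∈ skewCells f 0 :=
        mem_skewCells_zero.mpr ((mem_skewCells_zero.mp hp).trans_le (hf (by omega)))
      exact ⟨hcell, rowTableau_of_mem hcell, Or.inl (by omega)⟩
    · rintro ⟨a, b⟩ ⟨ha, hat, -⟩ ⟨c, d⟩ ⟨hc, hct, -⟩ h
      rw [rowTableau_of_mem ha] at hat
      rw [rowTableau_of_mem hc] at hct
      simp only [Prod.mk.injEq] at h ⊢
      omega

theorem lrCoeff_zero_self_pos {f : ℕ → ℕ} (hf : Antitone f) {m : ℕ}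
    (hm : ∀ i, m ≤ i → f i = 0) : 0 < lrCoeff f 0 f :=
  lrCoeff_pos_of_isLRTableau (skewCells_finite hm 0) hm (isLRTableau_rowTableau hf)
    fun _ => rowTableau_of_notMem

theorem lrCoeff_tauPartition_range_left_pos (I : Finset ℕ) (k : ℕ) :
    0 < lrCoeff (tauPartition I) (tauPartition (range k)) (tauPartition I) := by
  rw [tauPartition_range]
  exact lrCoeff_zero_self_pos (tauPartition_antitone I) fun _ => tauPartition_eq_zero_of_card_le

theorem lrCoeff_tauPartition_range_right_pos (I : Finset ℕ) (k : ℕ) :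
    0 < lrCoeff (tauPartition I) (tauPartition I) (tauPartition (range k)) := by
  rw [tauPartition_range]
  exact lrCoeff_self_zero_pos _

theorem isExtHornTuple_compl {n : ℕ} {T : Finset ℕ} (hT : T ⊆ range n) :
    IsExtHornTuple n T (range n \ T) (range n \ T) T (range n) ∅ := by
  have hcard : #(range n \ T) + #T = n := by rw [card_sdiff_add_card_eq_card hT, card_range]
  have hrange : ∀ s ⊆ range n, range #s ⊆ range n := fun s hs =>
    range_subset_range.mpr ((card_le_card hs).trans (card_range n).le)
  refine ⟨hT, sdiff_subset, sdiff_subset, hT, subset_rfl, empty_subset _,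
    disjoint_sdiff, sdiff_disjoint, disjoint_empty_right _,
    by simp, by simp, by simp [hcard],
    range #(range n \ T), range n \ T, T, range #T, ∅, ∅,
    hrange _ sdiff_subset, sdiff_subset, hT, hrange _ hT, empty_subset _, empty_subset _,
    card_range _, rfl, rfl, card_range _, rfl, rfl,
    lrCoeff_tauPartition_range_left_pos _ _, lrCoeff_tauPartition_range_right_pos _ _,
    lrCoeff_tauPartition_range_right_pos ∅ 0, lrCoeff_tauPartition_range_right_pos _ 0,
    lrCoeff_tauPartition_range_left_pos _ 0, ?_⟩
  rw [tauPartition_range, tauPartition_range, tauPartition_range]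
  exact lrCoeff_self_zero_pos 0

theorem IsExtHornTuple.rotate {n : ℕ} {A A' B B' C C' : Finset ℕ}
    (h : IsExtHornTuple n A A' B B' C C') : IsExtHornTuple n B B' C C' A A' := by
  obtain ⟨hA, hA', hB, hB', hC, hC', hAA', hBB', hCC', hAc, hBc, hCc,
    A₁, A₂, B₁, B₂, C₁, C₂, hA₁, hA₂, hB₁, hB₂, hC₁, hC₂,
    hA₁c, hA₂c, hB₁c, hB₂c, hC₁c, hC₂c, hA'lr, hB'lr, hC'lr, hAlr, hBlr, hClr⟩ := h
  exact ⟨hB, hB', hC, hC', hA, hA', hBB', hCC', hAA',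
    hBc.trans (add_comm _ _), hCc.trans (add_comm _ _), hAc,
    B₁, B₂, C₁, C₂, A₁, A₂, hB₁, hB₂, hC₁, hC₂, hA₁, hA₂,
    hB₁c, hB₂c, hC₁c, hC₂c, hA₁c, hA₂c, hB'lr, hC'lr, hA'lr, hBlr, hClr, hAlr⟩

theorem SatisfiesExtHorn.rotate {n : ℕ} {μ ν lam : ℕ → ℕ} (h : SatisfiesExtHorn n μ ν lam) :
    SatisfiesExtHorn n ν lam μ := by
  intro A A' B B' C C' hABC
  have := h C C' A A' B B' hABC.rotate.rotate
  linarith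

theorem SatisfiesExtHorn.sum_abs_sub_le {n : ℕ} {μ ν lam : ℕ → ℕ}
    (h : SatisfiesExtHorn n μ ν lam) :
    ∑ i ∈ range n, |(μ i : ℤ) - ν i| ≤ ∑ i ∈ range n, (lam i : ℤ) := by
  set T := (range n).filter fun i => μ i ≤ ν i
  have hineq := h T (range n \ T) (range n \ T) T (range n) ∅
    (isExtHornTuple_compl (filter_subset _ _))
  have habs : ∑ i ∈ range n, |(μ i : ℤ) - ν i| =
      ∑ i ∈ T, ((ν i : ℤ) - μ i) + ∑ i ∈ range n \ T, ((μ i : ℤ) - ν i) := by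
    rw [← sum_filter_add_sum_filter_not (range n) (fun i => μ i ≤ ν i), filter_not]
    congr 1 <;> refine sum_congr rfl fun i hi => ?_
    · have hle := (mem_filter.mp hi).2
      rw [abs_of_nonpos (by omega), neg_sub]
    · have hlt : ¬μ i ≤ ν i := fun hle =>
        (mem_sdiff.mp hi).2 (mem_filter.mpr ⟨(mem_sdiff.mp hi).1, hle⟩)
      rw [abs_of_nonneg (by omega)]
  rw [habs]
  simp only [sum_empty, sum_sub_distrib] at hineq ⊢
  linarith

theorem sum_add_sum_sub_le_two_mul_sum_min {ι : Type*} {s : Finset ι} {a b c : ι → ℕ}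
    (h : ∑ i ∈ s, |(a i : ℤ) - b i| ≤ ∑ i ∈ s, (c i : ℤ)) :
    ∑ i ∈ s, (a i : ℤ) + ∑ i ∈ s, (b i : ℤ) - ∑ i ∈ s, (c i : ℤ) ≤
      2 * ∑ i ∈ s, (min (a i) (b i) : ℤ) := by
  have hmin : ∀ i, 2 * (min (a i) (b i) : ℤ) = a i + b i - |(a i : ℤ) - b i| := fun i => by
    rw [← max_sub_min_eq_abs']; linarith [min_add_max (a i : ℤ) (b i)]
  rw [mul_sum]
  simp only [hmin, sum_sub_distrib, sum_add_distrib]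
  linarith

theorem wedge_of_satisfiesExtHorn_general (n : ℕ) (μ ν lam : ℕ → ℕ)
    (hEH : SatisfiesExtHorn n μ ν lam) (σ : Equiv.Perm (Fin 3)) :
    (∑ i ∈ Finset.range n, ((![μ, ν, lam] (σ 0)) i : ℤ)) +
      (∑ i ∈ Finset.range n, ((![μ, ν, lam] (σ 1)) i : ℤ)) -
      (∑ i ∈ Finset.range n, ((![μ, ν, lam] (σ 2)) i : ℤ)) ≤
      2 * ∑ i ∈ Finset.range n,
        (min ((![μ, ν, lam] (σ 0)) i) ((![μ, ν, lam] (σ 1)) i) : ℤ) := by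
  have hlam := hEH.sum_abs_sub_le
  have hμ := hEH.rotate.sum_abs_sub_le
  have hν := hEH.rotate.rotate.sum_abs_sub_le
  have hσ : (σ 0 = 0 ∧ σ 1 = 1 ∧ σ 2 = 2) ∨ (σ 0 = 1 ∧ σ 1 = 0 ∧ σ 2 = 2) ∨
      (σ 0 = 1 ∧ σ 1 = 2 ∧ σ 2 = 0) ∨ (σ 0 = 2 ∧ σ 1 = 1 ∧ σ 2 = 0) ∨
      (σ 0 = 2 ∧ σ 1 = 0 ∧ σ 2 = 1) ∨ (σ 0 = 0 ∧ σ 1 = 2 ∧ σ 2 = 1) := by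
    revert σ; decide
  rcases hσ with ⟨h₀, h₁, h₂⟩ | ⟨h₀, h₁, h₂⟩ | ⟨h₀, h₁, h₂⟩ | ⟨h₀, h₁, h₂⟩ | ⟨h₀, h₁, h₂⟩ |
      ⟨h₀, h₁, h₂⟩ <;>
    simp only [h₀, h₁, h₂, Matrix.cons_val_zero, Matrix.cons_val_one, Matrix.cons_val_two,
      Matrix.head_cons, Matrix.tail_cons] <;>
    refine sum_add_sum_sub_le_two_mul_sum_min ?_ <;>
    first
    | assumption
    | rw [sum_congr rfl fun i _ => abs_sub_comm _ _]; assumption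

/-- Proposition 2.5(v): the extended Horn inequalities imply
`|μ ∧ ν| ≥ (|μ| + |ν| − |lam|) / 2` and all its `S₃`-permutations (stated as
`|μ| + |ν| − |lam| ≤ 2 |μ ∧ ν|`).  The permutation `σ` permutes the roles of
`μ, ν, lam`. -/
theorem wedge_of_satisfiesExtHorn (n : ℕ) (μ ν lam : ℕ → ℕ)
    (hμ : IsPartitionN n μ) (hν : IsPartitionN n ν) (hlam : IsPartitionN n lam)
    (hEH : SatisfiesExtHorn n μ ν lam) (σ : Equiv.Perm (Fin 3)) :
    (∑ i ∈ Finset.range n, ((![μ, ν, lam] (σ 0)) i : ℤ)) +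
      (∑ i ∈ Finset.range n, ((![μ, ν, lam] (σ 1)) i : ℤ)) -
      (∑ i ∈ Finset.range n, ((![μ, ν, lam] (σ 2)) i : ℤ)) ≤
      2 * ∑ i ∈ Finset.range n,
        (min ((![μ, ν, lam] (σ 0)) i) ((![μ, ν, lam] (σ 1)) i) : ℤ) :=
  wedge_of_satisfiesExtHorn_general n μ ν lam hEH σ
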